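/- arXiv:2302.12093 — 5 statements merged into one kernel-verified Lean document; each statement's English description precedes it below -/
import Mathlib

section
/- The relative derivative of the idle probability satisfies: −π_0'(p)/π_0(p) = Σ_{k=0}^{K−1} (λ_k'(p)/λ_k(p)) · S_{k+1}(p), where S_j(p) = Σ_{i=j}^K π_i(p). -/
/-!
Detailed balance `λ_k π_k = μ π_{k+1}` says that the logarithmic derivatives satisfy
`π_{k+1}'/π_{k+1} = λ_k'/λ_k + π_k'/π_k`, hence `π_k' = (π_0'/π_0 + Σ_{i<k} λ_i'/λ_i) π_k`.
Summing over `k`, the left side vanishes because `Σ_k π_k ≡ 1`, and exchanging the order of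
summation on the right turns `Σ_k Σ_{i<k} (λ_i'/λ_i) π_k` into `Σ_i (λ_i'/λ_i) S_{i+1}`.
-/

open Finset

section LogDeriv

variable {𝕜 𝕜' : Type*} [NontriviallyNormedField 𝕜] [NontriviallyNormedField 𝕜']
  [NormedAlgebra 𝕜 𝕜']

theorem logDeriv_eq_add_of_mul_eq_const_mul {f g h : 𝕜 → 𝕜'} {c : 𝕜'} {x : 𝕜} (hc : c ≠ 0)
    (hfgh : ∀ y, f y * g y = c * h y) (hf : f x ≠ 0) (hg : g x ≠ 0)
    (hdf : DifferentiableAt 𝕜 f x) (hdg : DifferentiableAt 𝕜 g x) :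
    logDeriv h x = logDeriv f x + logDeriv g x := by
  rw [← logDeriv_const_mul x c hc, ← funext hfgh, logDeriv_mul x hf hg hdf hdg]

theorem logDeriv_eq_logDeriv_zero_add_sum_of_detailed_balance {lam pr : ℕ → 𝕜 → 𝕜'} {μ : 𝕜'}
    {x : 𝕜} {n : ℕ} (hμ : μ ≠ 0) (hdb : ∀ y, ∀ k < n, lam k y * pr k y = μ * pr (k + 1) y)
    (hlam : ∀ k < n, lam k x ≠ 0) (hpr : ∀ k < n, pr k x ≠ 0)
    (hdlam : ∀ k < n, DifferentiableAt 𝕜 (lam k) x)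
    (hdpr : ∀ k < n, DifferentiableAt 𝕜 (pr k) x) :
    logDeriv (pr n) x = logDeriv (pr 0) x + ∑ i ∈ range n, logDeriv (lam i) x := by
  induction n with
  | zero => simp
  | succ n ih =>
    have hn : n < n + 1 := n.lt_succ_self
    rw [logDeriv_eq_add_of_mul_eq_const_mul hμ (fun y => hdb y n hn) (hlam n hn) (hpr n hn)
        (hdlam n hn) (hdpr n hn),
      ih (fun y k hk => hdb y k (by omega)) (fun k hk => hlam k (by omega))
        (fun k hk => hpr k (by omega)) (fun k hk => hdlam k (by omega))
        (fun k hk => hdpr k (by omega)),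
      sum_range_succ]
    ring

end LogDeriv

theorem Finset.sum_range_succ_sum_range_mul {R : Type*} [NonUnitalNonAssocSemiring R]
    (a b : ℕ → R) (n : ℕ) :
    ∑ k ∈ range (n + 1), (∑ i ∈ range k, a i) * b k
      = ∑ i ∈ range n, a i * ∑ k ∈ Icc (i + 1) n, b k := by
  simp only [sum_mul, mul_sum]
  exact sum_comm' fun k i => by simp only [mem_range, mem_Icc]; omega

theorem idle_probability_relative_derivative_general
    (K : ℕ) (μ : ℝ) (hμ : 0 < μ)
    (lam pr : ℕ → ℝ → ℝ) (p : ℝ)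
    (hlampos : ∀ q, ∀ k < K, 0 < lam k q)
    (hprpos : ∀ q, ∀ k ≤ K, 0 < pr k q)
    (hsum : ∀ q, ∑ k ∈ Finset.range (K + 1), pr k q = 1)
    (hdb : ∀ q, ∀ k < K, lam k q * pr k q = μ * pr (k + 1) q)
    (hdiffLam : ∀ k ≤ K, DifferentiableAt ℝ (lam k) p)
    (hdiffPr : ∀ k ≤ K, DifferentiableAt ℝ (pr k) p) :
    -(deriv (pr 0) p) / pr 0 p
      = ∑ k ∈ Finset.range K,
          deriv (lam k) p / lam k p * ∑ i ∈ Finset.Icc (k + 1) K, pr i p := by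
  have hderiv_pr : ∀ k ∈ range (K + 1),
      deriv (pr k) p = (logDeriv (pr 0) p + ∑ i ∈ range k, logDeriv (lam i) p) * pr k p := by
    intro k hk
    have hkK : k ≤ K := Nat.lt_succ_iff.mp (mem_range.mp hk)
    rw [← logDeriv_eq_logDeriv_zero_add_sum_of_detailed_balance hμ.ne'
        (fun q i hi => hdb q i (by omega)) (fun i hi => (hlampos p i (by omega)).ne')
        (fun i hi => (hprpos p i (by omega)).ne') (fun i hi => hdiffLam i (by omega))
        (fun i hi => hdiffPr i (by omega)),
      logDeriv_apply, div_mul_cancel₀ _ (hprpos p k hkK).ne']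
  have hderiv_sum : ∑ k ∈ range (K + 1), deriv (pr k) p = 0 := by
    rw [← deriv_fun_sum fun k hk => hdiffPr k (Nat.lt_succ_iff.mp (mem_range.mp hk)),
      funext hsum, deriv_const]
  rw [sum_congr rfl hderiv_pr] at hderiv_sum
  simp only [add_mul, sum_add_distrib, ← mul_sum, hsum p, mul_one,
    sum_range_succ_sum_range_mul, logDeriv_apply] at hderiv_sum
  rw [neg_div]
  linarith

/-- The relative derivative of the idle probability satisfies
`−π₀'(p)/π₀(p) = Σ_{k=0}^{K−1} (λ_k'(p)/λ_k(p)) · S_{k+1}(p)`,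
where `S_j(p) = Σ_{i=j}^K π_i(p)`. -/
theorem idle_probability_relative_derivative
    (K : ℕ) (hK : 1 ≤ K) (μ : ℝ) (hμ : 0 < μ)
    (lam pr : ℕ → ℝ → ℝ) (p : ℝ)
    (hlamK : ∀ q, lam K q = 0)
    (hlampos : ∀ q, ∀ k < K, 0 < lam k q)
    (hprpos : ∀ q, ∀ k ≤ K, 0 < pr k q)
    (hsum : ∀ q, ∑ k ∈ Finset.range (K + 1), pr k q = 1)
    (hdb : ∀ q, ∀ k < K, lam k q * pr k q = μ * pr (k + 1) q)
    (hdiffLam : ∀ k ≤ K, DifferentiableAt ℝ (lam k) p)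
    (hdiffPr : ∀ k ≤ K, DifferentiableAt ℝ (pr k) p) :
    -(deriv (pr 0) p) / pr 0 p
      = ∑ k ∈ Finset.range K,
          deriv (lam k) p / lam k p * ∑ i ∈ Finset.Icc (k + 1) K, pr i p :=
  idle_probability_relative_derivative_general K μ hμ lam pr p hlampos hprpos hsum hdb hdiffLam
    hdiffPr
end

section
/- The gap between the model-free and weighted-direct-effect asymptotic variances is an explicit sum of squares: σ_λ̄² − σ_WDE² = μ Σ_{k=1}^K (π_k − π_0 S_k)² / π_k. In particular σ_WDE² ≤ σ_λ̄². -/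
/-!
Since `π_k = S_k - S_{k+1}`, expanding the square gives
`(π_k - π₀ S_k)² / π_k = π_k + 2 π₀ (S_k S_{k+1} - S_k²) / π_k + π₀² S_k² / π_k`.
Summing over `1 ≤ k ≤ K`, with `Σ_{k ≥ 1} π_k = 1 - π₀` and `S_{K+1} = 0` (so the first sum in
`σ_λ̄²` may run up to `K`), yields `(σ_λ̄² - σ_WDE²) / μ`.
-/

open Finset

lemma sq_sub_mul_div_eq {p s t : ℝ} (c : ℝ) (hp : p ≠ 0) (hpst : p = s - t) :
    (p - c * s) ^ 2 / p = p + 2 * c * (s * t / p - s ^ 2 / p) + c ^ 2 * (s ^ 2 / p) := by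
  field_simp
  rw [hpst]
  ring

lemma sum_sq_sub_mul_div_eq {ι : Type*} (s : Finset ι) (p S S' : ι → ℝ) (c : ℝ)
    (hp : ∀ k ∈ s, p k ≠ 0) (hpS : ∀ k ∈ s, p k = S k - S' k) :
    ∑ k ∈ s, (p k - c * S k) ^ 2 / p k
      = ∑ k ∈ s, p k + 2 * c * (∑ k ∈ s, S k * S' k / p k - ∑ k ∈ s, S k ^ 2 / p k)
        + c ^ 2 * ∑ k ∈ s, S k ^ 2 / p k := by
  rw [← sum_sub_distrib, mul_sum, mul_sum, ← sum_add_distrib, ← sum_add_distrib]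
  exact sum_congr rfl fun k hk ↦ sq_sub_mul_div_eq c (hp k hk) (hpS k hk)

section TailSum

variable (K : ℕ) (f : ℕ → ℝ)

lemma sum_Icc_eq_add_sum_Icc_succ {k : ℕ} (hk : k ≤ K) :
    ∑ j ∈ Icc k K, f j = f k + ∑ j ∈ Icc (k + 1) K, f j := by
  rw [← insert_Icc_add_one_left_eq_Icc hk, sum_insert (by simp)]

lemma sum_range_succ_eq_add_sum_Icc_one :
    ∑ j ∈ range (K + 1), f j = f 0 + ∑ j ∈ Icc 1 K, f j := by
  rw [range_eq_Ico, Ico_add_one_right_eq_Icc, sum_Icc_eq_add_sum_Icc_succ K f K.zero_le]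

end TailSum

theorem variance_gap_sum_of_squares_general
    (K : ℕ) (μ : ℝ) (hμ : 0 < μ)
    (pr : ℕ → ℝ) (hpr : ∀ k ≤ K, 0 < pr k)
    (hsum : ∑ k ∈ Finset.range (K + 1), pr k = 1)
    (S : ℕ → ℝ) (hS : ∀ k, S k = ∑ j ∈ Finset.Icc k K, pr j)
    (σ_bar σWDE : ℝ)
    (hσ_bar : σ_bar = (1 - pr 0) * μ + 2 * μ * pr 0 *
      ((∑ k ∈ Finset.Icc 1 (K - 1), S k * S (k + 1) / pr k)
        - (1 - pr 0) * ∑ k ∈ Finset.Icc 1 K, S k ^ 2 / pr k))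
    (hσWDE : σWDE = μ * pr 0 ^ 2 * ∑ k ∈ Finset.Icc 1 K, S k ^ 2 / pr k) :
    σ_bar - σWDE = μ * ∑ k ∈ Finset.Icc 1 K, (pr k - pr 0 * S k) ^ 2 / pr k
      ∧ σWDE ≤ σ_bar := by
  have hpos : ∀ k ∈ Icc 1 K, 0 < pr k := fun k hk ↦ hpr k (mem_Icc.mp hk).2
  have hS_last : S (K + 1) = 0 := by simp [hS]
  have hA : ∑ k ∈ Icc 1 (K - 1), S k * S (k + 1) / pr k
      = ∑ k ∈ Icc 1 K, S k * S (k + 1) / pr k := by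
    refine sum_subset (Icc_subset_Icc_right (K.sub_le 1)) fun k hk hk' ↦ ?_
    obtain rfl : k = K := by simp only [mem_Icc] at hk hk'; omega
    simp [hS_last]
  have hsq := sum_sq_sub_mul_div_eq (Icc 1 K) pr S (fun k ↦ S (k + 1)) (pr 0)
    (fun k hk ↦ (hpos k hk).ne')
    (fun k hk ↦ by rw [hS, hS, sum_Icc_eq_add_sum_Icc_succ K pr (mem_Icc.mp hk).2]; ring)
  have hgap : σ_bar - σWDE = μ * ∑ k ∈ Icc 1 K, (pr k - pr 0 * S k) ^ 2 / pr k := by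
    rw [hσ_bar, hσWDE, hA, hsq]
    linear_combination μ * sum_range_succ_eq_add_sum_Icc_one K pr - μ * hsum
  refine ⟨hgap, sub_nonneg.mp ?_⟩
  rw [hgap]
  exact mul_nonneg hμ.le (sum_nonneg fun k hk ↦ div_nonneg (sq_nonneg _) (hpos k hk).le)

/-- The gap between the model-free and weighted-direct-effect asymptotic variances is
an explicit sum of squares: `σ_λ̄² − σ_WDE² = μ Σ_{k=1}^K (π_k − π₀ S_k)² / π_k`.
In particular `σ_WDE² ≤ σ_λ̄²`. -/
theorem variance_gap_sum_of_squares
    (K : ℕ) (hK : 1 ≤ K) (μ : ℝ) (hμ : 0 < μ)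
    (pr : ℕ → ℝ) (hpr : ∀ k ≤ K, 0 < pr k)
    (hsum : ∑ k ∈ Finset.range (K + 1), pr k = 1)
    (S : ℕ → ℝ) (hS : ∀ k, S k = ∑ j ∈ Finset.Icc k K, pr j)
    (σ_bar σWDE : ℝ)
    (hσ_bar : σ_bar = (1 - pr 0) * μ + 2 * μ * pr 0 *
      ((∑ k ∈ Finset.Icc 1 (K - 1), S k * S (k + 1) / pr k)
        - (1 - pr 0) * ∑ k ∈ Finset.Icc 1 K, S k ^ 2 / pr k))
    (hσWDE : σWDE = μ * pr 0 ^ 2 * ∑ k ∈ Finset.Icc 1 K, S k ^ 2 / pr k) :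
    σ_bar - σWDE = μ * ∑ k ∈ Finset.Icc 1 K, (pr k - pr 0 * S k) ^ 2 / pr k
      ∧ σWDE ≤ σ_bar :=
  variance_gap_sum_of_squares_general K μ hμ pr hpr hsum S hS σ_bar σWDE hσ_bar hσWDE
end

section
/- The weighted direct effect asymptotic variance is exactly half of the idle-time-based asymptotic variance and at most the model-free asymptotic variance: σ_WDE² = σ_{π_0}²/2 and σ_WDE² ≤ σ_λ̄². -/
/-!
Since `S (k + 1) = S k - π k`, each cross term `S k * S (k + 1) / π k` of `σ_λ̄²` equals
`S k ^ 2 / π k - S k`, and the difference `σ_λ̄² - σ_WDE²` becomes the sum of squares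
`μ * ∑ k ∈ [1, K], (π k - π 0 * S k) ^ 2 / π k`.
-/

open Finset

lemma Finset.sum_Icc_sub_one_right_of_eq_zero {M : Type*} [AddCommMonoid M] {f : ℕ → M}
    {a b : ℕ} (hb : f b = 0) : ∑ k ∈ Icc a (b - 1), f k = ∑ k ∈ Icc a b, f k := by
  refine sum_subset (Icc_subset_Icc_right (Nat.sub_le b 1)) fun k hk hk' => ?_
  obtain rfl : k = b := by simp only [mem_Icc] at hk hk'; omega
  exact hb

lemma sum_sub_mul_sq_div {s : Finset ℕ} {p S : ℕ → ℝ} (c : ℝ) (hp : ∀ k ∈ s, p k ≠ 0) :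
    ∑ k ∈ s, (p k - c * S k) ^ 2 / p k
      = ∑ k ∈ s, p k - 2 * c * ∑ k ∈ s, S k + c ^ 2 * ∑ k ∈ s, S k ^ 2 / p k := by
  rw [mul_sum, mul_sum, ← sum_sub_distrib, ← sum_add_distrib]
  refine sum_congr rfl fun k hk => ?_
  field_simp [hp k hk]
  ring

section TailSum

variable {p S : ℕ → ℝ} {K : ℕ}

lemma tail_sum_succ (hS : ∀ k, S k = ∑ j ∈ Icc k K, p j) {k : ℕ} (hk : k ≤ K) :
    S (k + 1) = S k - p k := by
  rw [hS, hS, ← insert_Icc_add_one_left_eq_Icc hk, sum_insert (by simp)]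
  ring

lemma tail_sum_eq_zero (hS : ∀ k, S k = ∑ j ∈ Icc k K, p j) : S (K + 1) = 0 := by
  simp [hS]

lemma sum_mul_tail_sum_succ_div (hS : ∀ k, S k = ∑ j ∈ Icc k K, p j) {a : ℕ}
    (hp : ∀ k ∈ Icc a K, p k ≠ 0) :
    ∑ k ∈ Icc a (K - 1), S k * S (k + 1) / p k
      = ∑ k ∈ Icc a K, S k ^ 2 / p k - ∑ k ∈ Icc a K, S k := by
  rw [sum_Icc_sub_one_right_of_eq_zero (by simp [tail_sum_eq_zero hS]), ← sum_sub_distrib]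
  refine sum_congr rfl fun k hk => ?_
  rw [tail_sum_succ hS (mem_Icc.1 hk).2]
  field_simp [hp k hk]

end TailSum

theorem variance_comparison_general
    (K : ℕ) (μ : ℝ) (hμ : 0 < μ)
    (pr : ℕ → ℝ) (hpr : ∀ k ≤ K, 0 < pr k)
    (hsum : ∑ k ∈ Finset.range (K + 1), pr k = 1)
    (S : ℕ → ℝ) (hS : ∀ k, S k = ∑ j ∈ Finset.Icc k K, pr j)
    (σ_bar σπ₀ σWDE : ℝ)
    (hσ_bar : σ_bar = (1 - pr 0) * μ + 2 * μ * pr 0 *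
      ((∑ k ∈ Finset.Icc 1 (K - 1), S k * S (k + 1) / pr k)
        - (1 - pr 0) * ∑ k ∈ Finset.Icc 1 K, S k ^ 2 / pr k))
    (hσπ₀ : σπ₀ = 2 * μ * pr 0 ^ 2 * ∑ k ∈ Finset.Icc 1 K, S k ^ 2 / pr k)
    (hσWDE : σWDE = μ * pr 0 ^ 2 * ∑ k ∈ Finset.Icc 1 K, S k ^ 2 / pr k) :
    σWDE = σπ₀ / 2 ∧ σWDE ≤ σ_bar := by
  refine ⟨by rw [hσWDE, hσπ₀]; ring, ?_⟩
  have hpos : ∀ k ∈ Icc 1 K, 0 < pr k := fun k hk => hpr k (mem_Icc.1 hk).2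
  have hmass : ∑ k ∈ Icc 1 K, pr k = 1 - pr 0 := by
    rw [Nat.range_succ_eq_Icc_zero, ← insert_Icc_add_one_left_eq_Icc K.zero_le,
      sum_insert (by simp), zero_add] at hsum
    linarith
  have hgap : σ_bar - σWDE = μ * ∑ k ∈ Icc 1 K, (pr k - pr 0 * S k) ^ 2 / pr k := by
    have hne : ∀ k ∈ Icc 1 K, pr k ≠ 0 := fun k hk => (hpos k hk).ne'
    rw [hσ_bar, hσWDE, sum_mul_tail_sum_succ_div hS hne, sum_sub_mul_sq_div _ hne, hmass]
    ring
  have hsq : 0 ≤ ∑ k ∈ Icc 1 K, (pr k - pr 0 * S k) ^ 2 / pr k :=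
    sum_nonneg fun k hk => div_nonneg (sq_nonneg _) (hpos k hk).le
  linarith [mul_nonneg hμ.le hsq]

/-- The weighted direct effect asymptotic variance is exactly half of the idle-time-based
asymptotic variance and at most the model-free asymptotic variance:
`σ_WDE² = σ_{π₀}²/2` and `σ_WDE² ≤ σ_λ̄²`. -/
theorem variance_comparison
    (K : ℕ) (hK : 1 ≤ K) (μ : ℝ) (hμ : 0 < μ)
    (pr : ℕ → ℝ) (hpr : ∀ k ≤ K, 0 < pr k)
    (hsum : ∑ k ∈ Finset.range (K + 1), pr k = 1)
    (S : ℕ → ℝ) (hS : ∀ k, S k = ∑ j ∈ Finset.Icc k K, pr j)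
    (σ_bar σπ₀ σWDE : ℝ)
    (hσ_bar : σ_bar = (1 - pr 0) * μ + 2 * μ * pr 0 *
      ((∑ k ∈ Finset.Icc 1 (K - 1), S k * S (k + 1) / pr k)
        - (1 - pr 0) * ∑ k ∈ Finset.Icc 1 K, S k ^ 2 / pr k))
    (hσπ₀ : σπ₀ = 2 * μ * pr 0 ^ 2 * ∑ k ∈ Finset.Icc 1 K, S k ^ 2 / pr k)
    (hσWDE : σWDE = μ * pr 0 ^ 2 * ∑ k ∈ Finset.Icc 1 K, S k ^ 2 / pr k) :
    σWDE = σπ₀ / 2 ∧ σWDE ≤ σ_bar :=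
  variance_comparison_general K μ hμ pr hpr hsum S hS σ_bar σπ₀ σWDE hσ_bar hσπ₀ hσWDE
end

section
/- The explicitly defined matrix A with entries A_{k,i} = (π_i/μ)(−Σ_{j=1}^{min(i,k)} 1/π_j + Σ_{j=1}^{k} S_j/π_j + Σ_{j=1}^{i} S_j/π_j − Σ_{j=1}^{K} S_j²/π_j) satisfies the two defining conditions of the group inverse of Q: Q · A = I − 1πᵀ and πᵀ · A = 0ᵀ. -/
/-!
Column `i` of `A` has increments `A_{k+1,i} - A_{k,i} = π_i (S_{k+1} - [k < i]) / (μ π_{k+1})`.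
With detailed balance, row `k` of `Q` applied to it is
`(π_i / π_k) ((S_{k+1} - S_k) - ([k < i] - [k ≤ i])) = [k = i] - π_i`; the boundary rows fit the
same formula because `S_0 = 1` and `S_{K+1} = 0`. For `πᵀ A`, exchanging the order of summation
gives `∑_k π_k ∑_{j ≤ k} b_j = ∑_j b_j S_j`, which turns the two `k`-dependent terms of `A_{k,i}`
into the negatives of the two constant ones.
-/

open Finset

/-- The generator of the birth–death queue-length chain: superdiagonal entries `λ_k`,
subdiagonal entries `μ`, diagonal entries chosen so that every row sums to zero. -/
def birthDeathGenerator (K : ℕ) (μ : ℝ) (lam : ℕ → ℝ) :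
    Matrix (Fin (K + 1)) (Fin (K + 1)) ℝ :=
  Matrix.of fun k i =>
    if (i : ℕ) = (k : ℕ) + 1 then lam k
    else if (i : ℕ) + 1 = (k : ℕ) then μ
    else if i = k then -(if (k : ℕ) < K then lam k else 0) - (if 0 < (k : ℕ) then μ else 0)
    else 0

lemma sum_fin_ite_val_eq_mul {R : Type*} [NonUnitalNonAssocSemiring R] (n j : ℕ) (c : R)
    (a : ℕ → R) :
    ∑ m : Fin n, (if (m : ℕ) = j then c else 0) * a m = if j < n then c * a j else 0 := by
  rw [Fin.sum_univ_eq_sum_range (fun m => (if m = j then c else 0) * a m)]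
  simp only [ite_mul, zero_mul, sum_ite_eq', mem_range]

lemma sum_birthDeathGenerator_mul (K : ℕ) (μ : ℝ) (lam a : ℕ → ℝ) (k : Fin (K + 1)) :
    ∑ m, birthDeathGenerator K μ lam k m * a m
      = (if (k : ℕ) < K then lam k * (a (k + 1) - a k) else 0)
        - (if 0 < (k : ℕ) then μ * (a k - a (k - 1)) else 0) := by
  have entry : ∀ m : Fin (K + 1), birthDeathGenerator K μ lam k m
      = (if (m : ℕ) = k + 1 then lam k else 0)
        + (if (m : ℕ) = k - 1 then (if 0 < (k : ℕ) then μ else 0) else 0)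
        - (if (m : ℕ) = k then (if (k : ℕ) < K then lam k else 0) + (if 0 < (k : ℕ) then μ else 0)
          else 0) := by
    intro m
    simp only [birthDeathGenerator, Matrix.of_apply, Fin.ext_iff]
    split_ifs <;> first | omega | ring
  simp only [entry, add_mul, sub_mul, sum_add_distrib, sum_sub_distrib, sum_fin_ite_val_eq_mul]
  have hk := k.is_lt
  split_ifs <;> first | omega | ring

/-- `A_{k,i}` with `k, i` ranging over all of `ℕ`, so that neighbouring rows are compared without
`Fin` arithmetic. -/
noncomputable def groupInverseEntry (K : ℕ) (μ : ℝ) (pr S : ℕ → ℝ) (k i : ℕ) : ℝ :=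
  pr i / μ *
    (-(∑ j ∈ Icc 1 (min i k), (pr j)⁻¹)
      + ∑ j ∈ Icc 1 k, S j / pr j
      + ∑ j ∈ Icc 1 i, S j / pr j
      - ∑ j ∈ Icc 1 K, S j ^ 2 / pr j)

lemma groupInverseEntry_succ_sub (K : ℕ) (μ : ℝ) (pr S : ℕ → ℝ) (m i : ℕ) :
    groupInverseEntry K μ pr S (m + 1) i - groupInverseEntry K μ pr S m i
      = pr i / (μ * pr (m + 1)) * (S (m + 1) - if m < i then 1 else 0) := by
  have hmin : ∑ j ∈ Icc 1 (min i (m + 1)), (pr j)⁻¹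
      = ∑ j ∈ Icc 1 (min i m), (pr j)⁻¹ + if m < i then (pr (m + 1))⁻¹ else 0 := by
    split_ifs with h
    · rw [min_eq_right h, min_eq_right h.le, sum_Icc_succ_top (by omega)]
    · rw [min_eq_left (by omega), min_eq_left (by omega), add_zero]
  simp only [groupInverseEntry, hmin, sum_Icc_succ_top (Nat.le_add_left 1 m)]
  split_ifs <;> ring

lemma sum_birthDeathGenerator_mul_groupInverseEntry (K : ℕ) (μ : ℝ) (hμ : μ ≠ 0)
    (lam pr S : ℕ → ℝ) (hpr : ∀ k ≤ K, pr k ≠ 0) (hsum : ∑ k ∈ range (K + 1), pr k = 1)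
    (hdb : ∀ k < K, lam k * pr k = μ * pr (k + 1))
    (hS : ∀ j, S j = ∑ l ∈ Icc j K, pr l) (k : Fin (K + 1)) (i : ℕ) (hi : i ≤ K) :
    ∑ m, birthDeathGenerator K μ lam k m * groupInverseEntry K μ pr S m i
      = (if (k : ℕ) = i then 1 else 0) - pr i := by
  obtain ⟨k, hk⟩ := k
  have hpk : pr k ≠ 0 := hpr k (by omega)
  have hS_succ : S k = pr k + S (k + 1) := by
    rw [hS, hS, Icc_add_one_left_eq_Ioc, Icc_eq_cons_Ioc (by omega), sum_cons]
  have up : (if k < K then lam k * (groupInverseEntry K μ pr S (k + 1) i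
        - groupInverseEntry K μ pr S k i) else 0)
      = pr i / pr k * (S (k + 1) - if k < i then 1 else 0) := by
    rw [groupInverseEntry_succ_sub]
    split_ifs with hkK hki hki
    · have hpk' := hpr (k + 1) hkK
      field_simp
      linear_combination pr i * (S (k + 1) - 1) * hdb k hkK
    · have hpk' := hpr (k + 1) hkK
      field_simp
      linear_combination pr i * S (k + 1) * hdb k hkK
    · omega
    · rw [hS, Icc_eq_empty (by omega), sum_empty]; ring
  have down : (if 0 < k then μ * (groupInverseEntry K μ pr S k i
        - groupInverseEntry K μ pr S (k - 1) i) else 0)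
      = pr i / pr k * (S k - if k ≤ i then 1 else 0) := by
    rcases Nat.eq_zero_or_pos k with rfl | hk0
    · have hS0 : S 0 = 1 := by rw [hS, ← Nat.range_succ_eq_Icc_zero, hsum]
      simp [hS0]
    · obtain ⟨n, rfl⟩ : ∃ n, k = n + 1 := ⟨k - 1, by omega⟩
      rw [if_pos hk0, Nat.add_sub_cancel, groupInverseEntry_succ_sub]
      simp only [Nat.add_one_le_iff]
      field_simp
  rw [sum_birthDeathGenerator_mul K μ lam (fun m => groupInverseEntry K μ pr S m i), Fin.val_mk,
    up, down, hS_succ]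
  split_ifs <;> first | omega | (subst_vars; field_simp; ring1)

lemma sum_range_mul_sum_Icc_one {R : Type*} [CommSemiring R] (K : ℕ) (p b : ℕ → R) :
    ∑ k ∈ range (K + 1), p k * ∑ j ∈ Icc 1 k, b j
      = ∑ j ∈ Icc 1 K, b j * ∑ l ∈ Icc j K, p l := by
  simp only [mul_sum]
  rw [sum_comm' (t' := Icc 1 K) (s' := fun j => Icc j K) (fun k j => by
    simp only [mem_range, mem_Icc]; omega)]
  exact sum_congr rfl fun _ _ => sum_congr rfl fun _ _ => mul_comm _ _

lemma sum_mul_groupInverseEntry (K : ℕ) (μ : ℝ) (pr S : ℕ → ℝ)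
    (hsum : ∑ k ∈ range (K + 1), pr k = 1) (hS : ∀ j, S j = ∑ l ∈ Icc j K, pr l)
    (i : ℕ) (hi : i ≤ K) :
    ∑ k ∈ range (K + 1), pr k * groupInverseEntry K μ pr S k i = 0 := by
  have hmin : ∀ k, ∑ j ∈ Icc 1 (min i k), (pr j)⁻¹
      = ∑ j ∈ Icc 1 k, if j ≤ i then (pr j)⁻¹ else 0 := by
    intro k
    rw [← sum_filter]
    congr 1
    ext j
    simp only [mem_Icc, mem_filter]
    omega
  have hfilter : (Icc 1 K).filter (· ≤ i) = Icc 1 i := by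
    ext j
    simp only [mem_Icc, mem_filter]
    omega
  have hT : ∑ k ∈ range (K + 1), pr k * ∑ j ∈ Icc 1 (min i k), (pr j)⁻¹
      = ∑ j ∈ Icc 1 i, S j / pr j := by
    simp only [hmin, sum_range_mul_sum_Icc_one, ← hS, ite_mul, zero_mul]
    rw [← sum_filter, hfilter]
    exact sum_congr rfl fun _ _ => inv_mul_eq_div _ _
  have hG : ∑ k ∈ range (K + 1), pr k * ∑ j ∈ Icc 1 k, S j / pr j
      = ∑ j ∈ Icc 1 K, S j ^ 2 / pr j := by
    rw [sum_range_mul_sum_Icc_one]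
    exact sum_congr rfl fun j _ => by rw [← hS]; ring
  have expand : ∀ k, pr k * groupInverseEntry K μ pr S k i
      = pr i / μ * (-(pr k * ∑ j ∈ Icc 1 (min i k), (pr j)⁻¹)
          + pr k * ∑ j ∈ Icc 1 k, S j / pr j
          + pr k * (∑ j ∈ Icc 1 i, S j / pr j - ∑ j ∈ Icc 1 K, S j ^ 2 / pr j)) := by
    intro k
    unfold groupInverseEntry
    ring
  rw [sum_congr rfl fun k _ => expand k, ← mul_sum, sum_add_distrib, sum_add_distrib,
    sum_neg_distrib, ← sum_mul, hT, hG, hsum]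
  ring

theorem group_inverse_explicit_formula_general
    (K : ℕ) (μ : ℝ) (hμ : 0 < μ)
    (lam pr : ℕ → ℝ)
    (hpr : ∀ k ≤ K, 0 < pr k)
    (hsum : ∑ k ∈ Finset.range (K + 1), pr k = 1)
    (hdb : ∀ k < K, lam k * pr k = μ * pr (k + 1))
    (S : ℕ → ℝ) (hS : ∀ j, S j = ∑ l ∈ Finset.Icc j K, pr l)
    (A : Matrix (Fin (K + 1)) (Fin (K + 1)) ℝ)
    (hA : A = Matrix.of fun k i : Fin (K + 1) =>
      pr i / μ *
        (-(∑ j ∈ Finset.Icc 1 (min (i : ℕ) (k : ℕ)), (pr j)⁻¹)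
          + ∑ j ∈ Finset.Icc 1 (k : ℕ), S j / pr j
          + ∑ j ∈ Finset.Icc 1 (i : ℕ), S j / pr j
          - ∑ j ∈ Finset.Icc 1 K, S j ^ 2 / pr j)) :
    birthDeathGenerator K μ lam * A
        = 1 - Matrix.of (fun _ i : Fin (K + 1) => pr i)
      ∧ Matrix.vecMul (fun i : Fin (K + 1) => pr i) A = 0 := by
  rw [show A = Matrix.of fun k i : Fin (K + 1) => groupInverseEntry K μ pr S k i from hA]
  constructor
  · ext k i
    simp only [Matrix.mul_apply, Matrix.of_apply, Matrix.sub_apply, Matrix.one_apply, Fin.ext_iff]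
    exact sum_birthDeathGenerator_mul_groupInverseEntry K μ hμ.ne' lam pr S
      (fun k hk => (hpr k hk).ne') hsum hdb hS k i i.is_le
  · ext i
    simp only [Matrix.vecMul, dotProduct, Matrix.of_apply, Pi.zero_apply]
    rw [Fin.sum_univ_eq_sum_range (fun k => pr k * groupInverseEntry K μ pr S k i)]
    exact sum_mul_groupInverseEntry K μ pr S hsum hS i i.is_le

/-- The explicitly defined matrix `A` with entries
`A_{k,i} = (π_i/μ)(−Σ_{j=1}^{min(i,k)} 1/π_j + Σ_{j=1}^{k} S_j/π_j + Σ_{j=1}^{i} S_j/π_j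
            − Σ_{j=1}^{K} S_j²/π_j)`
satisfies the two defining conditions of the group inverse of `Q`:
`Q · A = I − 1πᵀ` and `πᵀ · A = 0ᵀ`. -/
theorem group_inverse_explicit_formula
    (K : ℕ) (hK : 1 ≤ K) (μ : ℝ) (hμ : 0 < μ)
    (lam pr : ℕ → ℝ)
    (hlam : ∀ k < K, 0 < lam k)
    (hpr : ∀ k ≤ K, 0 < pr k)
    (hsum : ∑ k ∈ Finset.range (K + 1), pr k = 1)
    (hdb : ∀ k < K, lam k * pr k = μ * pr (k + 1))
    (S : ℕ → ℝ) (hS : ∀ j, S j = ∑ l ∈ Finset.Icc j K, pr l)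
    (A : Matrix (Fin (K + 1)) (Fin (K + 1)) ℝ)
    (hA : A = Matrix.of fun k i : Fin (K + 1) =>
      pr i / μ *
        (-(∑ j ∈ Finset.Icc 1 (min (i : ℕ) (k : ℕ)), (pr j)⁻¹)
          + ∑ j ∈ Finset.Icc 1 (k : ℕ), S j / pr j
          + ∑ j ∈ Finset.Icc 1 (i : ℕ), S j / pr j
          - ∑ j ∈ Finset.Icc 1 K, S j ^ 2 / pr j)) :
    birthDeathGenerator K μ lam * A
        = 1 - Matrix.of (fun _ i : Fin (K + 1) => pr i)
      ∧ Matrix.vecMul (fun i : Fin (K + 1) => pr i) A = 0 :=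
  group_inverse_explicit_formula_general K μ hμ lam pr hpr hsum hdb S hS A hA
end

section
/- The steady-state probabilities under symmetrically averaged perturbed arrival rates deviate from the unperturbed ones only quadratically in the perturbation: there exists a constant C, depending only on K, B₀, B₁, B₂, and μ, such that for every price p ∈ ℝ, every perturbation ζ ∈ ℝ, and every 0 ≤ k ≤ K, |π_k(p, ζ) − π_k(p, 0)| ≤ C ζ². -/
/-- Symmetrically averaged perturbed arrival rates:
`λ̃_k(p, ζ) = (λ_k(p−ζ) + λ_k(p+ζ))/2`. -/
noncomputable def lamTilde (lam : ℕ → ℝ → ℝ) (k : ℕ) (p ζ : ℝ) : ℝ :=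
  (lam k (p - ζ) + lam k (p + ζ)) / 2

/-- Steady-state probabilities of the birth–death queue run with the averaged arrival
rates `λ̃_k(p, ζ)`:
`π_k(p, ζ) = π₀(p, ζ) · Π_{i=1}^k λ̃_{i−1}(p, ζ)/μ` with
`π₀(p, ζ) = (1 + Σ_{k=1}^K Π_{i=1}^k λ̃_{i−1}(p, ζ)/μ)⁻¹`. -/
noncomputable def steadyStatePerturbed (K : ℕ) (μ : ℝ) (lam : ℕ → ℝ → ℝ)
    (k : ℕ) (p ζ : ℝ) : ℝ :=
  (1 + ∑ j ∈ Finset.Icc 1 K, ∏ i ∈ Finset.range j, (lamTilde lam i p ζ / μ))⁻¹ *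
    ∏ i ∈ Finset.range k, (lamTilde lam i p ζ / μ)

/-! The first-order terms of the Taylor expansions of `λᵢ` at `p - ζ` and `p + ζ` cancel, so
`λ̃ᵢ(p, ζ) = λᵢ(p) + O(ζ²)` uniformly. The claim then follows from the Lipschitz continuity of
the stationary law `r ↦ (∏_{i<k} rᵢ) / (1 + ∑_{j=1}^K ∏_{i<j} rᵢ)` of a birth–death chain in its
rate ratios `rᵢ = λ̃ᵢ/μ` on `[0, M]^K`: the products are Lipschitz there, and the normalizer is
at least `1` because the ratios are nonnegative. -/

open Finset

theorem lamTilde_mem_Icc {lam : ℕ → ℝ → ℝ} {k : ℕ} {a b : ℝ}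
    (h : ∀ q, lam k q ∈ Set.Icc a b) (p ζ : ℝ) : lamTilde lam k p ζ ∈ Set.Icc a b := by
  obtain ⟨h₁, h₂⟩ := h (p - ζ)
  obtain ⟨h₃, h₄⟩ := h (p + ζ)
  unfold lamTilde
  constructor <;> linarith

theorem abs_sub_le_of_abs_deriv_le {g : ℝ → ℝ} {B : ℝ} (hg : Differentiable ℝ g)
    (hg' : ∀ x, |deriv g x| ≤ B) (x y : ℝ) : |g x - g y| ≤ B * |x - y| :=
  convex_univ.norm_image_sub_le_of_norm_deriv_le (fun z _ => hg z) (fun z _ => hg' z)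
    (Set.mem_univ y) (Set.mem_univ x)

theorem abs_average_sub_le_of_abs_deriv_deriv_le {f : ℝ → ℝ} {B : ℝ} (hf : Differentiable ℝ f)
    (hf' : Differentiable ℝ (deriv f)) (hf'' : ∀ x, |deriv (deriv f) x| ≤ B) (p ζ : ℝ) :
    |(f (p - ζ) + f (p + ζ)) / 2 - f p| ≤ B * ζ ^ 2 := by
  set g : ℝ → ℝ := fun t => f (p + t) + f (p - t)
  have hg : ∀ t, HasDerivAt g (deriv f (p + t) - deriv f (p - t)) t := by
    intro t
    have hplus := (hf (p + t)).hasDerivAt.comp t ((hasDerivAt_id t).const_add p)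
    have hminus := (hf (p - t)).hasDerivAt.comp t ((hasDerivAt_id t).const_sub p)
    exact (hplus.add hminus).congr_deriv (by ring)
  have hB : 0 ≤ B := (abs_nonneg _).trans (hf'' 0)
  have hg' : ∀ t ∈ Set.uIcc 0 ζ, ‖deriv g t‖ ≤ 2 * B * |ζ| := by
    intro t ht
    have ht' : |t| ≤ |ζ| := by simpa using Set.abs_sub_left_of_mem_uIcc ht
    rw [(hg t).deriv, Real.norm_eq_abs]
    calc |deriv f (p + t) - deriv f (p - t)| ≤ B * |p + t - (p - t)| :=
          abs_sub_le_of_abs_deriv_le hf' hf'' _ _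
      _ = 2 * B * |t| := by rw [show p + t - (p - t) = 2 * t by ring, abs_mul, abs_two]; ring
      _ ≤ 2 * B * |ζ| := by gcongr
  have hmvt := (convex_uIcc 0 ζ).norm_image_sub_le_of_norm_deriv_le
    (fun t _ => (hg t).differentiableAt) hg' Set.left_mem_uIcc Set.right_mem_uIcc
  rw [Real.norm_eq_abs, Real.norm_eq_abs, sub_zero] at hmvt
  calc |(f (p - ζ) + f (p + ζ)) / 2 - f p| = |g ζ - g 0| / 2 := by
        simp only [g, add_zero, sub_zero]
        rw [← abs_two, ← abs_div]
        ring_nf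
    _ ≤ 2 * B * |ζ| * |ζ| / 2 := by gcongr
    _ = B * ζ ^ 2 := by rw [← sq_abs ζ]; ring

theorem abs_prod_range_le_pow {b : ℕ → ℝ} {M : ℝ} {n : ℕ} (hb : ∀ i < n, |b i| ≤ M) :
    |∏ i ∈ range n, b i| ≤ M ^ n := by
  rw [abs_prod]
  exact (prod_le_prod (fun _ _ => abs_nonneg _) fun i hi => hb i (mem_range.1 hi)).trans_eq
    (by simp)

theorem abs_prod_range_sub_prod_range_le {a b : ℕ → ℝ} {M δ : ℝ} {n : ℕ}
    (ha : ∀ i < n, |a i| ≤ M) (hb : ∀ i < n, |b i| ≤ M) (hab : ∀ i < n, |a i - b i| ≤ δ) :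
    |∏ i ∈ range n, a i - ∏ i ∈ range n, b i| ≤ n * M ^ (n - 1) * δ := by
  induction n with
  | zero => simp
  | succ n ih =>
    have ha' : |a n| ≤ M := ha n n.lt_succ_self
    have hab' : |a n - b n| ≤ δ := hab n n.lt_succ_self
    have hM : 0 ≤ M := (abs_nonneg _).trans ha'
    have hδ : 0 ≤ δ := (abs_nonneg _).trans hab'
    have hprev := ih (fun i hi => ha i (hi.trans n.lt_succ_self))
      (fun i hi => hb i (hi.trans n.lt_succ_self)) (fun i hi => hab i (hi.trans n.lt_succ_self))
    have hb_prod := abs_prod_range_le_pow fun i hi => hb i (hi.trans n.lt_succ_self)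
    rw [prod_range_succ, prod_range_succ]
    calc |(∏ i ∈ range n, a i) * a n - (∏ i ∈ range n, b i) * b n|
        = |(∏ i ∈ range n, a i - ∏ i ∈ range n, b i) * a n
            + (∏ i ∈ range n, b i) * (a n - b n)| := by ring_nf
      _ ≤ |∏ i ∈ range n, a i - ∏ i ∈ range n, b i| * |a n|
            + |∏ i ∈ range n, b i| * |a n - b n| := by
          rw [← abs_mul, ← abs_mul]; exact abs_add_le _ _
      _ ≤ n * M ^ (n - 1) * δ * M + M ^ n * δ := by gcongr
      _ = (n + 1 : ℕ) * M ^ (n + 1 - 1) * δ := by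
          rcases n with _ | n
          · simp
          · push_cast; ring

noncomputable def birthDeathNormalizer (K : ℕ) (r : ℕ → ℝ) : ℝ :=
  1 + ∑ j ∈ Icc 1 K, ∏ i ∈ range j, r i

/-- Stationary law of the birth–death chain on `{0, …, K}` whose ratio of birth rate to death
rate out of state `i` is `r i`. -/
noncomputable def birthDeathStationary (K : ℕ) (r : ℕ → ℝ) (k : ℕ) : ℝ :=
  (birthDeathNormalizer K r)⁻¹ * ∏ i ∈ range k, r i

theorem steadyStatePerturbed_eq_birthDeathStationary (K : ℕ) (μ : ℝ) (lam : ℕ → ℝ → ℝ)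
    (k : ℕ) (p ζ : ℝ) :
    steadyStatePerturbed K μ lam k p ζ =
      birthDeathStationary K (fun i => lamTilde lam i p ζ / μ) k :=
  rfl

theorem abs_inv_sub_inv_le_abs_sub {x y : ℝ} (hx : 1 ≤ x) (hy : 1 ≤ y) :
    |x⁻¹ - y⁻¹| ≤ |x - y| := by
  rw [inv_sub_inv (by positivity) (by positivity), abs_div, abs_sub_comm,
    abs_of_pos (by positivity : 0 < x * y)]
  exact div_le_self (abs_nonneg _) (one_le_mul_of_one_le_of_one_le hx hy)

section BirthDeath

variable {K : ℕ} {r s : ℕ → ℝ} {M δ : ℝ}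

theorem one_le_birthDeathNormalizer (hr : ∀ i < K, 0 ≤ r i) : 1 ≤ birthDeathNormalizer K r :=
  le_add_of_nonneg_right <| sum_nonneg fun _ hj => prod_nonneg fun i hi =>
    hr i ((mem_range.1 hi).trans_le (mem_Icc.1 hj).2)

theorem abs_prod_range_sub_prod_range_le_of_le (hM : 1 ≤ M) (hδ : 0 ≤ δ)
    (hr : ∀ i < K, |r i| ≤ M) (hs : ∀ i < K, |s i| ≤ M) (hrs : ∀ i < K, |r i - s i| ≤ δ)
    {j : ℕ} (hj : j ≤ K) :
    |∏ i ∈ range j, r i - ∏ i ∈ range j, s i| ≤ K * M ^ K * δ := by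
  refine (abs_prod_range_sub_prod_range_le (fun i hi => hr i (hi.trans_le hj))
    (fun i hi => hs i (hi.trans_le hj)) (fun i hi => hrs i (hi.trans_le hj))).trans ?_
  gcongr
  omega

theorem abs_birthDeathNormalizer_sub_le (hM : 1 ≤ M) (hδ : 0 ≤ δ)
    (hr : ∀ i < K, |r i| ≤ M) (hs : ∀ i < K, |s i| ≤ M) (hrs : ∀ i < K, |r i - s i| ≤ δ) :
    |birthDeathNormalizer K r - birthDeathNormalizer K s| ≤ K * (K * M ^ K * δ) := by
  unfold birthDeathNormalizer
  rw [add_sub_add_left_eq_sub, ← sum_sub_distrib]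
  calc |∑ j ∈ Icc 1 K, (∏ i ∈ range j, r i - ∏ i ∈ range j, s i)|
      ≤ ∑ j ∈ Icc 1 K, |∏ i ∈ range j, r i - ∏ i ∈ range j, s i| := abs_sum_le_sum_abs _ _
    _ ≤ ∑ _j ∈ Icc 1 K, K * M ^ K * δ := sum_le_sum fun j hj =>
        abs_prod_range_sub_prod_range_le_of_le hM hδ hr hs hrs (mem_Icc.1 hj).2
    _ = K * (K * M ^ K * δ) := by simp

theorem abs_birthDeathStationary_sub_le (hM : 1 ≤ M) (hδ : 0 ≤ δ)
    (hr : ∀ i < K, r i ∈ Set.Icc 0 M) (hs : ∀ i < K, s i ∈ Set.Icc 0 M)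
    (hrs : ∀ i < K, |r i - s i| ≤ δ) {k : ℕ} (hk : k ≤ K) :
    |birthDeathStationary K r k - birthDeathStationary K s k| ≤
      K * M ^ K * (1 + K * M ^ K) * δ := by
  have hr' : ∀ i < K, |r i| ≤ M := fun i hi =>
    (abs_of_nonneg (hr i hi).1).trans_le (hr i hi).2
  have hs' : ∀ i < K, |s i| ≤ M := fun i hi =>
    (abs_of_nonneg (hs i hi).1).trans_le (hs i hi).2
  have hNr := one_le_birthDeathNormalizer fun i hi => (hr i hi).1
  have hNs := one_le_birthDeathNormalizer fun i hi => (hs i hi).1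
  have hNr_inv : |(birthDeathNormalizer K r)⁻¹| ≤ 1 := by
    rw [abs_of_pos (by positivity)]; exact inv_le_one_of_one_le₀ hNr
  have hPs : |∏ i ∈ range k, s i| ≤ M ^ K :=
    (abs_prod_range_le_pow fun i hi => hs' i (hi.trans_le hk)).trans (pow_le_pow_right₀ hM hk)
  unfold birthDeathStationary
  set Nr := birthDeathNormalizer K r
  set Ns := birthDeathNormalizer K s
  set Pr := ∏ i ∈ range k, r i
  set Ps := ∏ i ∈ range k, s i
  calc |Nr⁻¹ * Pr - Ns⁻¹ * Ps| = |Nr⁻¹ * (Pr - Ps) + (Nr⁻¹ - Ns⁻¹) * Ps| := by ring_nf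
    _ ≤ |Nr⁻¹| * |Pr - Ps| + |Nr⁻¹ - Ns⁻¹| * |Ps| := by
        rw [← abs_mul, ← abs_mul]; exact abs_add_le _ _
    _ ≤ 1 * (K * M ^ K * δ) + K * (K * M ^ K * δ) * M ^ K := by
        gcongr
        · exact abs_prod_range_sub_prod_range_le_of_le hM hδ hr' hs' hrs hk
        · exact (abs_inv_sub_inv_le_abs_sub hNr hNs).trans
            (abs_birthDeathNormalizer_sub_le hM hδ hr' hs' hrs)
    _ = K * M ^ K * (1 + K * M ^ K) * δ := by ring

end BirthDeath

theorem steady_state_quadratic_in_perturbation_general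
    (K : ℕ) (μ B₀ B₁ B₂ : ℝ)
    (hμ : 0 < μ) (hB₀ : 0 < B₀) (hB₂ : 0 ≤ B₂) :
    ∃ C : ℝ, ∀ lam : ℕ → ℝ → ℝ,
      (∀ k < K, Differentiable ℝ (lam k)) →
      (∀ k < K, Differentiable ℝ (deriv (lam k))) →
      (∀ k < K, ∀ p : ℝ, B₀ ≤ lam k p ∧ lam k p ≤ B₁) →
      (∀ k < K, ∀ p : ℝ, |deriv (deriv (lam k)) p| ≤ B₂) →
      ∀ p ζ : ℝ, ∀ k ≤ K,
        |steadyStatePerturbed K μ lam k p ζ - steadyStatePerturbed K μ lam k p 0|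
          ≤ C * ζ ^ 2 := by
  set M := max (B₁ / μ) 1
  refine ⟨K * M ^ K * (1 + K * M ^ K) * (B₂ / μ), ?_⟩
  intro lam hdiff hdiff' hbound hbound'' p ζ k hk
  have hrate : ∀ ξ, ∀ i < K, lamTilde lam i p ξ / μ ∈ Set.Icc 0 M := by
    intro ξ i hi
    obtain ⟨hlo, hhi⟩ := lamTilde_mem_Icc (hbound i hi) p ξ
    exact ⟨div_nonneg (hB₀.le.trans hlo) hμ.le,
      (div_le_div_of_nonneg_right hhi hμ.le).trans (le_max_left _ _)⟩
  have hpert : ∀ i < K, |lamTilde lam i p ζ / μ - lamTilde lam i p 0 / μ| ≤ B₂ / μ * ζ ^ 2 := by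
    intro i hi
    rw [← sub_div, abs_div, abs_of_pos hμ, div_mul_eq_mul_div]
    gcongr
    simpa [lamTilde] using
      abs_average_sub_le_of_abs_deriv_deriv_le (hdiff i hi) (hdiff' i hi) (hbound'' i hi) p ζ
  simp only [steadyStatePerturbed_eq_birthDeathStationary]
  calc _ ≤ K * M ^ K * (1 + K * M ^ K) * (B₂ / μ * ζ ^ 2) :=
        abs_birthDeathStationary_sub_le (le_max_right _ _) (by positivity) (hrate ζ) (hrate 0)
          hpert hk
    _ = _ := by ring

/-- The steady-state probabilities under symmetrically averaged perturbed arrival rates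
deviate from the unperturbed ones only quadratically in the perturbation: there is a
constant `C`, depending only on `K`, `B₀`, `B₁`, `B₂` and `μ`, such that for every
arrival-rate family satisfying the boundedness and smoothness conditions, every price
`p`, every perturbation `ζ`, and every `0 ≤ k ≤ K`, one has
`|π_k(p, ζ) − π_k(p, 0)| ≤ C ζ²`. -/
theorem steady_state_quadratic_in_perturbation
    (K : ℕ) (hK : 1 ≤ K) (μ B₀ B₁ B₂ : ℝ)
    (hμ : 0 < μ) (hB₀ : 0 < B₀) (hB₀₁ : B₀ ≤ B₁) (hB₂ : 0 ≤ B₂) :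
    ∃ C : ℝ, ∀ lam : ℕ → ℝ → ℝ,
      (∀ k < K, Differentiable ℝ (lam k)) →
      (∀ k < K, Differentiable ℝ (deriv (lam k))) →
      (∀ k < K, ∀ p : ℝ, B₀ ≤ lam k p ∧ lam k p ≤ B₁) →
      (∀ k < K, ∀ p : ℝ, |deriv (deriv (lam k)) p| ≤ B₂) →
      ∀ p ζ : ℝ, ∀ k ≤ K,
        |steadyStatePerturbed K μ lam k p ζ - steadyStatePerturbed K μ lam k p 0|
          ≤ C * ζ ^ 2 :=
  steady_state_quadratic_in_perturbation_general K μ B₀ B₁ B₂ hμ hB₀ hB₂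
end
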